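/- For 1 ≤ i ≤ n−1 set σ̃_i = (z_i − z_{i+1}) t_{s_i} + c_0 π_i ∈ H (the intertwiner σ_i = t_{s_i} + c_0 π_i/(z_i − z_{i+1}) with denominators cleared). Then σ̃_i² = c_0² π_i² − (z_i − z_{i+1})², which is the denominator-cleared form of the identity σ_i² = 1 − (c_0 π_i/(z_i − z_{i+1}))². -/

import Mathlib

/-- `ζ = e^{2πi/r}`. -/
noncomputable def zeta (r : ℕ) : ℂ := Complex.exp (2 * Real.pi * Complex.I / r)

theorem zeta_pow_self {r : ℕ} (hr : 0 < r) : zeta r ^ r = 1 := by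
  rw [zeta, ← Complex.exp_nat_mul, mul_comm, div_mul_cancel₀, Complex.exp_two_pi_mul_I]
  exact_mod_cast Nat.cast_ne_zero.mpr hr.ne'

theorem zeta_zpow_root (r : ℕ) (l : ℤ) : (zeta r ^ l) ^ r = 1 := by
  rcases Nat.eq_zero_or_pos r with h | h
  · rw [h, pow_zero]
  · rw [← zpow_natCast, ← zpow_mul, mul_comm, zpow_mul, zpow_natCast,
      zeta_pow_self h, one_zpow]

/-- The elements of `G(r,1,n)`: `n × n` monomial matrices whose nonzero entries are
`r`-th roots of unity. -/
def IsGMonomial (r n : ℕ) (w : Matrix (Fin n) (Fin n) ℂ) : Prop :=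
  ∃ (σ : Equiv.Perm (Fin n)) (a : Fin n → ℂ), (∀ i, a i ^ r = 1) ∧
    ∀ i j, w i j = if i = σ j then a j else 0

theorem IsGMonomial.mul {r n : ℕ} {w v : Matrix (Fin n) (Fin n) ℂ}
    (hw : IsGMonomial r n w) (hv : IsGMonomial r n v) : IsGMonomial r n (w * v) := by
  obtain ⟨σ, a, ha, hwe⟩ := hw
  obtain ⟨τ, b, hb, hve⟩ := hv
  refine ⟨σ * τ, fun j => a (τ j) * b j, fun j => by rw [mul_pow, ha, hb, one_mul], ?_⟩
  intro i j
  rw [Matrix.mul_apply, Finset.sum_eq_single (τ j)]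
  · rw [hwe, hve, if_pos rfl, Equiv.Perm.mul_apply]
    simp [ite_mul]
  · intro k _ hk
    rw [hve, if_neg hk, mul_zero]
  · simp

/-- The diagonal matrix `ζ_i^l`, with `ζ^l` in position `i` and `1`'s elsewhere. -/
noncomputable def zmat (r n : ℕ) (i : Fin n) (l : ℤ) : Matrix (Fin n) (Fin n) ℂ :=
  Matrix.diagonal (fun a => if a = i then zeta r ^ l else 1)

theorem isGMonomial_zmat (r : ℕ) {n : ℕ} (i : Fin n) (l : ℤ) :
    IsGMonomial r n (zmat r n i l) := by
  refine ⟨1, fun b => if b = i then zeta r ^ l else 1, ?_, ?_⟩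
  · intro b
    dsimp only
    split
    · exact zeta_zpow_root r l
    · exact one_pow r
  · intro a b
    rcases eq_or_ne a b with h | h
    · subst h; simp [zmat, Matrix.diagonal_apply]
    · simp [zmat, Matrix.diagonal_apply_ne _ h, Equiv.Perm.one_apply, h]

/-- The transposition (permutation) matrix `s_{ij}` interchanging coordinates `i` and `j`. -/
def smat {n : ℕ} (i j : Fin n) : Matrix (Fin n) (Fin n) ℂ :=
  Matrix.of fun a b => if a = Equiv.swap i j b then 1 else 0

theorem isGMonomial_smat (r : ℕ) {n : ℕ} (i j : Fin n) : IsGMonomial r n (smat i j) :=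
  ⟨Equiv.swap i j, fun _ => 1, fun _ => one_pow r, fun a b => by simp [smat]⟩

/-- The group `G(r,1,n)` of monomial matrices, as a subtype of matrices. -/
def GMon (r n : ℕ) : Type := {w : Matrix (Fin n) (Fin n) ℂ // IsGMonomial r n w}

/-- `ζ_i^l` as an element of `G(r,1,n)`. -/
noncomputable def zetaW (r : ℕ) {n : ℕ} (i : Fin n) (l : ℤ) : GMon r n :=
  ⟨zmat r n i l, isGMonomial_zmat r i l⟩

/-- `s_{ij}` as an element of `G(r,1,n)`. -/
noncomputable def sW (r : ℕ) {n : ℕ} (i j : Fin n) : GMon r n :=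
  ⟨smat i j, isGMonomial_smat r i j⟩

/-- The reflection `ζ_i^l s_{ij} ζ_i^{-l}` as an element of `G(r,1,n)`. -/
noncomputable def reflW (r : ℕ) {n : ℕ} (i j : Fin n) (l : ℤ) : GMon r n :=
  ⟨zmat r n i l * smat i j * zmat r n i (-l),
    ((isGMonomial_zmat r i l).mul (isGMonomial_smat r i j)).mul (isGMonomial_zmat r i (-l))⟩

/-- The element `ζ_i^l ζ_j^{-l}` of `G(r,1,n)`. -/
noncomputable def pairW (r : ℕ) {n : ℕ} (i j : Fin n) (l : ℤ) : GMon r n :=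
  ⟨zmat r n i l * zmat r n j (-l),
    (isGMonomial_zmat r i l).mul (isGMonomial_zmat r j (-l))⟩

/-- Generators of the rational Cherednik algebra of `G(r,1,n)`:
`x_1, …, x_n`, `y_1, …, y_n` and `t_w` for `w ∈ G(r,1,n)`. -/
inductive CGen (r n : ℕ) where
  | X (i : Fin n) : CGen r n
  | Y (i : Fin n) : CGen r n
  | T (w : GMon r n) : CGen r n

/-- The defining relations of the rational Cherednik algebra of `G(r,1,n)` with
parameters `κ, c₀, c_1, …, c_{r-1}`. -/
inductive CRel (r n : ℕ) (κ c₀ : ℂ) (c : ℕ → ℂ) :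
    FreeAlgebra ℂ (CGen r n) → FreeAlgebra ℂ (CGen r n) → Prop
  | t_mul (u w v : GMon r n) : u.1 = w.1 * v.1 → CRel r n κ c₀ c
      (FreeAlgebra.ι ℂ (.T u)) (FreeAlgebra.ι ℂ (.T w) * FreeAlgebra.ι ℂ (.T v))
  | t_one (u : GMon r n) : u.1 = 1 → CRel r n κ c₀ c (FreeAlgebra.ι ℂ (.T u)) 1
  | t_x (w : GMon r n) (i : Fin n) : CRel r n κ c₀ c
      (FreeAlgebra.ι ℂ (.T w) * FreeAlgebra.ι ℂ (.X i))
      (∑ j, (w.1⁻¹ i j) • (FreeAlgebra.ι ℂ (.X j) * FreeAlgebra.ι ℂ (.T w)))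
  | t_y (w : GMon r n) (i : Fin n) : CRel r n κ c₀ c
      (FreeAlgebra.ι ℂ (.T w) * FreeAlgebra.ι ℂ (.Y i))
      (∑ j, (w.1 j i) • (FreeAlgebra.ι ℂ (.Y j) * FreeAlgebra.ι ℂ (.T w)))
  | xx (i j : Fin n) : CRel r n κ c₀ c
      (FreeAlgebra.ι ℂ (.X i) * FreeAlgebra.ι ℂ (.X j))
      (FreeAlgebra.ι ℂ (.X j) * FreeAlgebra.ι ℂ (.X i))
  | yy (i j : Fin n) : CRel r n κ c₀ c
      (FreeAlgebra.ι ℂ (.Y i) * FreeAlgebra.ι ℂ (.Y j))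
      (FreeAlgebra.ι ℂ (.Y j) * FreeAlgebra.ι ℂ (.Y i))
  | yx_ne (i j : Fin n) : i ≠ j → CRel r n κ c₀ c
      (FreeAlgebra.ι ℂ (.Y i) * FreeAlgebra.ι ℂ (.X j))
      (FreeAlgebra.ι ℂ (.X j) * FreeAlgebra.ι ℂ (.Y i) +
        c₀ • ∑ l ∈ Finset.range r,
          (zeta r ^ (-(l : ℤ))) • FreeAlgebra.ι ℂ (.T (reflW r i j (l : ℤ))))
  | yx_eq (i : Fin n) : CRel r n κ c₀ c
      (FreeAlgebra.ι ℂ (.Y i) * FreeAlgebra.ι ℂ (.X i))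
      (FreeAlgebra.ι ℂ (.X i) * FreeAlgebra.ι ℂ (.Y i) + κ • (1 : FreeAlgebra ℂ (CGen r n))
        - ∑ l ∈ Finset.Ico 1 r,
            (c l * (1 - zeta r ^ (-(l : ℤ)))) • FreeAlgebra.ι ℂ (.T (zetaW r i (l : ℤ)))
        - c₀ • ∑ j ∈ Finset.univ.erase i, ∑ l ∈ Finset.range r,
            FreeAlgebra.ι ℂ (.T (reflW r i j (l : ℤ))))

variable (r n : ℕ) (κ c₀ : ℂ) (c : ℕ → ℂ)

/-- The image of `x_i` in the rational Cherednik algebra of `G(r,1,n)`. -/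
noncomputable def cX (i : Fin n) : RingQuot (CRel r n κ c₀ c) :=
  RingQuot.mkAlgHom ℂ (CRel r n κ c₀ c) (FreeAlgebra.ι ℂ (.X i))

/-- The image of `y_i` in the rational Cherednik algebra of `G(r,1,n)`. -/
noncomputable def cY (i : Fin n) : RingQuot (CRel r n κ c₀ c) :=
  RingQuot.mkAlgHom ℂ (CRel r n κ c₀ c) (FreeAlgebra.ι ℂ (.Y i))

/-- The image of `t_w` in the rational Cherednik algebra of `G(r,1,n)`. -/
noncomputable def cT (w : GMon r n) : RingQuot (CRel r n κ c₀ c) :=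
  RingQuot.mkAlgHom ℂ (CRel r n κ c₀ c) (FreeAlgebra.ι ℂ (.T w))

/-- `φ_i = Σ_{j<i} Σ_{l=0}^{r-1} t_{ζ_i^l s_{ij} ζ_i^{-l}}`. -/
noncomputable def cPhi (i : Fin n) : RingQuot (CRel r n κ c₀ c) :=
  ∑ j ∈ Finset.univ.filter (fun j : Fin n => j < i), ∑ l ∈ Finset.range r,
    cT r n κ c₀ c (reflW r i j (l : ℤ))

/-- The Dunkl–Opdam–Cherednik element `z_i = y_i x_i + c₀ φ_i`. -/
noncomputable def cz (i : Fin n) : RingQuot (CRel r n κ c₀ c) :=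
  cY r n κ c₀ c i * cX r n κ c₀ c i + c₀ • cPhi r n κ c₀ c i

/-- `π_i = Σ_{l=0}^{r-1} t_{ζ_i^l ζ_{i+1}^{-l}}` (here with the two indices `i`, `i+1`
passed separately). -/
noncomputable def cPi (i j : Fin n) : RingQuot (CRel r n κ c₀ c) :=
  ∑ l ∈ Finset.range r, cT r n κ c₀ c (pairW r i j (l : ℤ))

/-- The idempotent `ε_{ij} = (1/r) Σ_{l=0}^{r-1} ζ^{-lj} t_{ζ_i^l}`. -/
noncomputable def cEps (i : Fin n) (j : ℤ) : RingQuot (CRel r n κ c₀ c) :=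
  (r : ℂ)⁻¹ • ∑ l ∈ Finset.range r, (zeta r ^ (-(l : ℤ) * j)) • cT r n κ c₀ c (zetaW r i (l : ℤ))

/-- The reparametrised constants `d_j = Σ_{l=1}^{r-1} ζ^{lj} c_l`. -/
noncomputable def dpar (j : ℤ) : ℂ := ∑ l ∈ Finset.Ico 1 r, zeta r ^ ((l : ℤ) * j) * c l

/-- The denominator-cleared intertwiner `σ̃_i = (z_i - z_{i+1}) t_{s_i} + c₀ π_i`. -/
noncomputable def cSigma (i j : Fin n) : RingQuot (CRel r n κ c₀ c) :=
  (cz r n κ c₀ c i - cz r n κ c₀ c j) * cT r n κ c₀ c (sW r i j) + c₀ • cPi r n κ c₀ c i j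

/-!
Write `A = z_i - z_{i+1}`, `t = t_{s_i}` and `q = c₀ π_i`, so that `σ̃_i = A t + q`. Then `t² = 1`,
`t` commutes with `π_i`, and `π_i` commutes with every `z_k`: the diagonal elements `t_{ζ_a^m}`
commute with `y_k x_k`, and conjugation by them only permutes the reflections
`ζ_k^l s_{kj} ζ_k^{-l}` summed in `φ_k`. Conjugation by `t` carries `φ_i` to `φ_{i+1}` minus its
term `j = i`, whose reflection sum is `π_i t`; this gives `t z_i = z_{i+1} t - c₀ π_i` and
`t z_{i+1} = z_i t + c₀ π_i`, hence `t A = -A t - 2q`, and expanding `(A t + q)²` leaves `q² - A²`.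
-/

namespace Function.Periodic

variable {M : Type*} [AddCancelCommMonoid M] {F : ℤ → M} {p : ℕ}

theorem sum_range_comp_add_one (hF : Periodic F p) :
    ∑ l ∈ Finset.range p, F (l + 1) = ∑ l ∈ Finset.range p, F l := by
  have h := (Finset.sum_range_succ' (fun l : ℕ => F l) p).symm.trans
    (Finset.sum_range_succ (fun l : ℕ => F l) p)
  rw [show F p = F 0 by simpa using hF 0] at h
  exact add_right_cancel (by exact_mod_cast h)

theorem sum_range_comp_add (hF : Periodic F p) (k : ℤ) :
    ∑ l ∈ Finset.range p, F (l + k) = ∑ l ∈ Finset.range p, F l := by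
  induction k using Int.induction_on with
  | zero => simp
  | succ k ih =>
    simpa only [add_right_comm _ (1 : ℤ), ← add_assoc, ih] using
      (hF.add_const k).sum_range_comp_add_one
  | pred k ih =>
    rw [← ih, ← (hF.add_const (-(k : ℤ) - 1)).sum_range_comp_add_one]
    simp only [add_right_comm _ (1 : ℤ), add_assoc, sub_add_cancel]

theorem sum_range_comp_neg (hF : Periodic F p) :
    ∑ l ∈ Finset.range p, F (-l) = ∑ l ∈ Finset.range p, F l := by
  rw [← Finset.sum_range_reflect, ← hF.sum_range_comp_add_one]
  refine Finset.sum_congr rfl fun l hl => ?_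
  have hl : ((p - 1 - l : ℕ) : ℤ) = p - 1 - l := by
    have := Finset.mem_range.mp hl
    omega
  rw [hl, ← hF.sub_eq ((l : ℤ) + 1)]
  congr 1
  ring

end Function.Periodic

theorem sq_mul_add_eq_sq_sub_sq {R : Type*} [Ring R] {a t q : R}
    (hta : t * a = -(a * t) - 2 * q) (hqa : Commute q a) (htq : Commute t q) (ht : t * t = 1) :
    (a * t + q) ^ 2 = q ^ 2 - a ^ 2 := by
  have htat : t * (a * t) = -a - 2 * q * t := by
    rw [← mul_assoc, hta, sub_mul, neg_mul, mul_assoc, ht, mul_one]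
  rw [sq, sq, sq, add_mul, mul_add, mul_add, mul_assoc a t, htat, mul_assoc a t q, htq.eq,
    ← mul_assoc q, hqa.eq]
  noncomm_ring

namespace Fin

variable {n} {i i' : Fin n}

theorem filter_lt_eq_insert_of_val_eq_add_one (h : (i' : ℕ) = i + 1) :
    Finset.univ.filter (· < i') = insert i (Finset.univ.filter (· < i)) := by
  ext j
  simp only [Finset.mem_filter, Finset.mem_insert, Finset.mem_univ, true_and, lt_def,
    Fin.ext_iff]
  omega

theorem swap_apply_of_lt_of_val_eq_add_one (h : (i' : ℕ) = i + 1) {j : Fin n} (hj : j < i) :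
    Equiv.swap i i' j = j :=
  Equiv.swap_apply_of_ne_of_ne hj.ne (ne_of_val_ne (by rw [lt_def] at hj; omega))

end Fin

theorem zeta_ne_zero : zeta r ≠ 0 := Complex.exp_ne_zero _

section Matrices

variable {r n}

theorem zmat_apply (i : Fin n) (l : ℤ) (a b : Fin n) :
    zmat r n i l a b = if a = b then (if a = i then zeta r ^ l else 1) else 0 :=
  Matrix.diagonal_apply _ _ _

theorem smat_apply (i j a b : Fin n) :
    smat i j a b = if a = Equiv.swap i j b then 1 else 0 := rfl

theorem zmat_mul_zmat (i : Fin n) (l m : ℤ) :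
    zmat r n i l * zmat r n i m = zmat r n i (l + m) := by
  simp only [zmat, Matrix.diagonal_mul_diagonal]
  congr 1
  funext a
  split_ifs <;> simp [zpow_add₀ (zeta_ne_zero r)]

theorem zmat_zero (i : Fin n) : zmat r n i 0 = 1 := by
  simp [zmat, Matrix.diagonal_one]

theorem zmat_commute (i j : Fin n) (l m : ℤ) : Commute (zmat r n i l) (zmat r n j m) := by
  simp only [zmat, Commute, SemiconjBy, Matrix.diagonal_mul_diagonal, mul_comm]

theorem zmat_add_natCast (i : Fin n) (l : ℤ) : zmat r n i (l + r) = zmat r n i l := by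
  have h : zeta r ^ (r : ℤ) = 1 := by simpa using zeta_zpow_root r 1
  simp only [zmat, zpow_add₀ (zeta_ne_zero r), h, mul_one]

theorem smat_mul_self (i j : Fin n) : smat i j * smat i j = 1 := by
  ext a b
  simp [Matrix.mul_apply, smat_apply, Matrix.one_apply]

theorem smat_comm (i j : Fin n) : smat i j = smat j i := by
  rw [smat, smat, Equiv.swap_comm]

theorem smat_mul_zmat (i j k : Fin n) (l : ℤ) :
    smat i j * zmat r n k l = zmat r n (Equiv.swap i j k) l * smat i j := by
  ext a b
  simp only [zmat, Matrix.mul_diagonal, Matrix.diagonal_mul, smat_apply]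
  split_ifs <;> simp_all

theorem smat_mul_smat (i j k m : Fin n) :
    smat i j * smat k m = smat (Equiv.swap i j k) (Equiv.swap i j m) * smat i j := by
  ext a b
  simp [Matrix.mul_apply, smat_apply, Equiv.swap_apply_apply]

theorem zmat_mul_smat_mul_zmat_neg (i j : Fin n) (l : ℤ) :
    zmat r n i l * smat i j * zmat r n i (-l) = zmat r n i l * zmat r n j (-l) * smat i j := by
  rw [mul_assoc, smat_mul_zmat, Equiv.swap_apply_left, mul_assoc]

end Matrices

section Cherednik

variable {r n κ c₀ c}

local notation "𝐱" => cX r n κ c₀ c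
local notation "𝐲" => cY r n κ c₀ c
local notation "𝐭" => cT r n κ c₀ c
local notation "𝛑" => cPi r n κ c₀ c
local notation "𝛗" => cPhi r n κ c₀ c
local notation "𝐳" => cz r n κ c₀ c

theorem cT_mul (w v : GMon r n) : 𝐭 w * 𝐭 v = 𝐭 ⟨w.1 * v.1, w.2.mul v.2⟩ := by
  simpa [cT] using (RingQuot.mkAlgHom_rel ℂ (CRel.t_mul (κ := κ) (c₀ := c₀) (c := c)
    ⟨w.1 * v.1, w.2.mul v.2⟩ w v rfl)).symm

theorem cT_congr {u v : GMon r n} (h : u.1 = v.1) : 𝐭 u = 𝐭 v := by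
  rw [Subtype.ext h]

theorem cT_eq_one {u : GMon r n} (h : u.1 = 1) : 𝐭 u = 1 := by
  simpa [cT] using RingQuot.mkAlgHom_rel ℂ (CRel.t_one (κ := κ) (c₀ := c₀) (c := c) u h)

theorem cT_mul_cT_eq {w v w' v' : GMon r n} (h : w.1 * v.1 = w'.1 * v'.1) :
    𝐭 w * 𝐭 v = 𝐭 w' * 𝐭 v' := by
  rw [cT_mul, cT_mul]
  exact cT_congr h

theorem cT_zetaW_mul_cT_zetaW (i : Fin n) (l m : ℤ) :
    𝐭 (zetaW r i l) * 𝐭 (zetaW r i m) = 𝐭 (zetaW r i (l + m)) := by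
  rw [cT_mul]
  exact cT_congr (zmat_mul_zmat i l m)

theorem cT_zetaW_zero (i : Fin n) : 𝐭 (zetaW r i 0) = 1 :=
  cT_eq_one (zmat_zero i)

theorem cT_zetaW_commute (i j : Fin n) (l m : ℤ) :
    Commute (𝐭 (zetaW r i l)) (𝐭 (zetaW r j m)) :=
  cT_mul_cT_eq (zmat_commute i j l m).eq

theorem cT_sW_mul_self (i j : Fin n) : 𝐭 (sW r i j) * 𝐭 (sW r i j) = 1 := by
  rw [cT_mul]
  exact cT_eq_one (smat_mul_self i j)

theorem cT_sW_comm (i j : Fin n) : 𝐭 (sW r i j) = 𝐭 (sW r j i) :=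
  cT_congr (smat_comm i j)

theorem cT_sW_mul_cT_zetaW (i j k : Fin n) (l : ℤ) :
    𝐭 (sW r i j) * 𝐭 (zetaW r k l) = 𝐭 (zetaW r (Equiv.swap i j k) l) * 𝐭 (sW r i j) :=
  cT_mul_cT_eq (smat_mul_zmat i j k l)

theorem cT_sW_mul_cT_sW (i j k m : Fin n) :
    𝐭 (sW r i j) * 𝐭 (sW r k m) = 𝐭 (sW r (Equiv.swap i j k) (Equiv.swap i j m)) * 𝐭 (sW r i j) :=
  cT_mul_cT_eq (smat_mul_smat i j k m)

theorem cT_pairW (i j : Fin n) (l : ℤ) :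
    𝐭 (pairW r i j l) = 𝐭 (zetaW r i l) * 𝐭 (zetaW r j (-l)) := by
  rw [cT_mul]
  exact cT_congr rfl

theorem cT_reflW (i j : Fin n) (l : ℤ) :
    𝐭 (reflW r i j l) = 𝐭 (pairW r i j l) * 𝐭 (sW r i j) := by
  rw [cT_mul]
  exact cT_congr (zmat_mul_smat_mul_zmat_neg i j l)

theorem cT_pairW_swap (i j : Fin n) (l : ℤ) : 𝐭 (pairW r j i l) = 𝐭 (pairW r i j (-l)) :=
  cT_congr <| by
    change zmat r n j l * zmat r n i (-l) = zmat r n i (-l) * zmat r n j (-(-l))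
    rw [neg_neg, (zmat_commute j i l (-l)).eq]

theorem cT_pairW_mul_cT_pairW (i j : Fin n) (l m : ℤ) :
    𝐭 (pairW r i j l) * 𝐭 (pairW r i j m) = 𝐭 (pairW r i j (l + m)) := by
  rw [cT_mul]
  refine cT_congr ?_
  change zmat r n i l * zmat r n j (-l) * (zmat r n i m * zmat r n j (-m)) = _
  rw [mul_assoc, ← mul_assoc (zmat r n j (-l)), (zmat_commute j i (-l) m).eq, mul_assoc,
    zmat_mul_zmat, ← mul_assoc, zmat_mul_zmat, ← neg_add]
  rfl

theorem periodic_cT_pairW (i j : Fin n) : Function.Periodic (fun l => 𝐭 (pairW r i j l)) r :=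
  fun l => cT_congr <| by
    change zmat r n i (l + r) * zmat r n j (-(l + r)) = zmat r n i l * zmat r n j (-l)
    rw [zmat_add_natCast, ← zmat_add_natCast j (-(l + r))]
    congr 2
    ring

theorem cT_sW_mul_cT_pairW (a b k j : Fin n) (l : ℤ) :
    𝐭 (sW r a b) * 𝐭 (pairW r k j l)
      = 𝐭 (pairW r (Equiv.swap a b k) (Equiv.swap a b j) l) * 𝐭 (sW r a b) := by
  rw [cT_pairW, cT_pairW, ← mul_assoc, cT_sW_mul_cT_zetaW, mul_assoc, cT_sW_mul_cT_zetaW,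
    ← mul_assoc]

theorem cT_mul_cX (w : GMon r n) (k : Fin n) :
    𝐭 w * 𝐱 k = ∑ j, w.1⁻¹ k j • (𝐱 j * 𝐭 w) := by
  simpa [cT, cX] using RingQuot.mkAlgHom_rel ℂ (CRel.t_x (κ := κ) (c₀ := c₀) (c := c) w k)

theorem cT_mul_cY (w : GMon r n) (k : Fin n) :
    𝐭 w * 𝐲 k = ∑ j, w.1 j k • (𝐲 j * 𝐭 w) := by
  simpa [cT, cY] using RingQuot.mkAlgHom_rel ℂ (CRel.t_y (κ := κ) (c₀ := c₀) (c := c) w k)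

theorem cT_mul_cX_of_mul_eq_one {w : GMon r n} {v : Matrix (Fin n) (Fin n) ℂ} (hv : w.1 * v = 1)
    {k j : Fin n} {a : ℂ} (hrow : ∀ m, v k m = if m = j then a else 0) :
    𝐭 w * 𝐱 k = a • (𝐱 j * 𝐭 w) := by
  simp [cT_mul_cX, Matrix.inv_eq_right_inv hv, hrow, ite_smul]

theorem cT_mul_cY_of_col {w : GMon r n} {k j : Fin n} {a : ℂ}
    (hcol : ∀ m, w.1 m k = if m = j then a else 0) :
    𝐭 w * 𝐲 k = a • (𝐲 j * 𝐭 w) := by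
  simp [cT_mul_cY, hcol, ite_smul]

theorem cT_sW_mul_cX (a b k : Fin n) :
    𝐭 (sW r a b) * 𝐱 k = 𝐱 (Equiv.swap a b k) * 𝐭 (sW r a b) := by
  simpa using cT_mul_cX_of_mul_eq_one (smat_mul_self a b) (k := k) (j := Equiv.swap a b k)
    (a := 1) fun m => by simp only [smat_apply, @eq_comm _ k, Equiv.swap_apply_eq_iff]

theorem cT_sW_mul_cY (a b k : Fin n) :
    𝐭 (sW r a b) * 𝐲 k = 𝐲 (Equiv.swap a b k) * 𝐭 (sW r a b) := by
  simpa using cT_mul_cY_of_col (w := sW r a b) (a := 1) fun m => smat_apply a b m k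

theorem cT_zetaW_mul_cX (a k : Fin n) (l : ℤ) :
    𝐭 (zetaW r a l) * 𝐱 k = (if k = a then zeta r ^ (-l) else 1) • (𝐱 k * 𝐭 (zetaW r a l)) := by
  refine cT_mul_cX_of_mul_eq_one (v := zmat r n a (-l)) ?_ fun m => ?_
  · change zmat r n a l * zmat r n a (-l) = 1
    rw [zmat_mul_zmat, add_neg_cancel, zmat_zero]
  · rw [zmat_apply]
    split_ifs <;> simp_all

theorem cT_zetaW_mul_cY (a k : Fin n) (l : ℤ) :
    𝐭 (zetaW r a l) * 𝐲 k = (if k = a then zeta r ^ l else 1) • (𝐲 k * 𝐭 (zetaW r a l)) :=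
  cT_mul_cY_of_col fun m => by
    change zmat r n a l m k = _
    rw [zmat_apply]
    split_ifs <;> simp_all

theorem cT_zetaW_commute_cY_mul_cX (a k : Fin n) (l : ℤ) :
    Commute (𝐭 (zetaW r a l)) (𝐲 k * 𝐱 k) := by
  have hunit : (if k = a then zeta r ^ l else 1) * (if k = a then zeta r ^ (-l) else 1) = 1 := by
    split_ifs
    · rw [← zpow_add₀ (zeta_ne_zero r), add_neg_cancel, zpow_zero]
    · rw [one_mul]
  rw [Commute, SemiconjBy, ← mul_assoc, cT_zetaW_mul_cY, smul_mul_assoc, mul_assoc, cT_zetaW_mul_cX,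
    mul_smul_comm, smul_smul, hunit, one_smul, mul_assoc]

theorem cT_sW_mul_cY_mul_cX (a b k : Fin n) :
    𝐭 (sW r a b) * (𝐲 k * 𝐱 k)
      = 𝐲 (Equiv.swap a b k) * 𝐱 (Equiv.swap a b k) * 𝐭 (sW r a b) := by
  rw [← mul_assoc, cT_sW_mul_cY, mul_assoc, cT_sW_mul_cX, mul_assoc]

theorem cPi_mul_cT_pairW (k j : Fin n) (m : ℤ) : 𝛑 k j * 𝐭 (pairW r k j m) = 𝛑 k j := by
  simp only [cPi, Finset.sum_mul, cT_pairW_mul_cT_pairW]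
  exact (periodic_cT_pairW k j).sum_range_comp_add m

theorem cPi_comm (k j : Fin n) : 𝛑 k j = 𝛑 j k := by
  simp only [cPi, cT_pairW_swap k j]
  exact (periodic_cT_pairW k j).sum_range_comp_neg.symm

theorem cPi_mul_cT_zetaW_right (k j : Fin n) (m : ℤ) :
    𝛑 k j * 𝐭 (zetaW r j m) = 𝛑 k j * 𝐭 (zetaW r k m) := by
  have hk : 𝐭 (zetaW r k m) = 𝐭 (pairW r k j m) * 𝐭 (zetaW r j m) := by
    rw [cT_pairW, mul_assoc, cT_zetaW_mul_cT_zetaW, neg_add_cancel, cT_zetaW_zero, mul_one]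
  rw [hk, ← mul_assoc, cPi_mul_cT_pairW]

theorem cPi_mul_cT_zetaW_swap (k j a : Fin n) (m : ℤ) :
    𝛑 k j * 𝐭 (zetaW r (Equiv.swap k j a) m) = 𝛑 k j * 𝐭 (zetaW r a m) := by
  rcases eq_or_ne a k with rfl | hk
  · rw [Equiv.swap_apply_left, cPi_mul_cT_zetaW_right]
  rcases eq_or_ne a j with rfl | hj
  · rw [Equiv.swap_apply_right, cPi_mul_cT_zetaW_right]
  · rw [Equiv.swap_apply_of_ne_of_ne hk hj]

theorem cT_sW_mul_cPi (a b k j : Fin n) :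
    𝐭 (sW r a b) * 𝛑 k j = 𝛑 (Equiv.swap a b k) (Equiv.swap a b j) * 𝐭 (sW r a b) := by
  simp only [cPi, Finset.mul_sum, Finset.sum_mul, cT_sW_mul_cT_pairW]

theorem cT_sW_commute_cPi (i j : Fin n) : Commute (𝐭 (sW r i j)) (𝛑 i j) := by
  rw [Commute, SemiconjBy, cT_sW_mul_cPi, Equiv.swap_apply_left, Equiv.swap_apply_right,
    ← cPi_comm]

theorem cT_zetaW_commute_cPi (a k j : Fin n) (m : ℤ) : Commute (𝐭 (zetaW r a m)) (𝛑 k j) :=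
  Commute.sum_right _ _ _ fun l _ => by
    rw [cT_pairW]
    exact (cT_zetaW_commute _ _ _ _).mul_right (cT_zetaW_commute _ _ _ _)

theorem cPhi_eq_sum (k : Fin n) :
    𝛗 k = ∑ j ∈ Finset.univ.filter (· < k), 𝛑 k j * 𝐭 (sW r k j) :=
  Finset.sum_congr rfl fun j _ => by simp only [cT_reflW, ← Finset.sum_mul, cPi]

theorem cT_sW_mul_cPi_mul_cT_sW (a b k j : Fin n) :
    𝐭 (sW r a b) * (𝛑 k j * 𝐭 (sW r k j))
      = 𝛑 (Equiv.swap a b k) (Equiv.swap a b j) * 𝐭 (sW r (Equiv.swap a b k) (Equiv.swap a b j))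
          * 𝐭 (sW r a b) := by
  rw [← mul_assoc, cT_sW_mul_cPi, mul_assoc, cT_sW_mul_cT_sW, ← mul_assoc]

-- `t_{ζ_a^m}` crosses `t_{s_{kj}}` as `t_{ζ_{s_{kj}(a)}^m}`, which `π_{kj}` does not distinguish
-- from `t_{ζ_a^m}`.
theorem cT_zetaW_commute_cPi_mul_cT_sW (a k j : Fin n) (m : ℤ) :
    Commute (𝐭 (zetaW r a m)) (𝛑 k j * 𝐭 (sW r k j)) := by
  rw [Commute, SemiconjBy, ← mul_assoc, (cT_zetaW_commute_cPi a k j m).eq, mul_assoc, mul_assoc,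
    cT_sW_mul_cT_zetaW, ← mul_assoc, ← mul_assoc, cPi_mul_cT_zetaW_swap]

theorem cT_zetaW_commute_cPhi (a k : Fin n) (m : ℤ) : Commute (𝐭 (zetaW r a m)) (𝛗 k) := by
  rw [cPhi_eq_sum]
  exact Commute.sum_right _ _ _ fun j _ => cT_zetaW_commute_cPi_mul_cT_sW a k j m

theorem cT_zetaW_commute_cz (a k : Fin n) (m : ℤ) : Commute (𝐭 (zetaW r a m)) (𝐳 k) :=
  (cT_zetaW_commute_cY_mul_cX a k m).add_right ((cT_zetaW_commute_cPhi a k m).smul_right c₀)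

theorem cPi_commute_cz (i j k : Fin n) : Commute (𝛑 i j) (𝐳 k) :=
  Commute.sum_left _ _ _ fun l _ => by
    rw [cT_pairW]
    exact (cT_zetaW_commute_cz _ _ _).mul_left (cT_zetaW_commute_cz _ _ _)

section Adjacent

variable {i i' : Fin n}

theorem cPhi_of_succ (h : (i' : ℕ) = i + 1) :
    𝛗 i' = 𝛑 i' i * 𝐭 (sW r i' i)
      + ∑ j ∈ Finset.univ.filter (· < i), 𝛑 i' j * 𝐭 (sW r i' j) := by
  rw [cPhi_eq_sum, Fin.filter_lt_eq_insert_of_val_eq_add_one h, Finset.sum_insert (by simp)]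

theorem cT_sW_mul_sum_lt (h : (i' : ℕ) = i + 1) (k : Fin n) :
    𝐭 (sW r i i') * ∑ j ∈ Finset.univ.filter (· < i), 𝛑 k j * 𝐭 (sW r k j)
      = (∑ j ∈ Finset.univ.filter (· < i),
          𝛑 (Equiv.swap i i' k) j * 𝐭 (sW r (Equiv.swap i i' k) j)) * 𝐭 (sW r i i') := by
  rw [Finset.mul_sum, Finset.sum_mul]
  refine Finset.sum_congr rfl fun j hj => ?_
  rw [cT_sW_mul_cPi_mul_cT_sW,
    Fin.swap_apply_of_lt_of_val_eq_add_one h (Finset.mem_filter.mp hj).2]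

theorem cT_sW_mul_cPhi_left (h : (i' : ℕ) = i + 1) :
    𝐭 (sW r i i') * 𝛗 i = 𝛗 i' * 𝐭 (sW r i i') - 𝛑 i i' := by
  rw [cPhi_eq_sum i, cT_sW_mul_sum_lt h, Equiv.swap_apply_left, cPhi_of_succ h, add_mul,
    cT_sW_comm i' i, mul_assoc, cT_sW_mul_self, mul_one, cPi_comm, add_sub_cancel_left]

theorem cT_sW_mul_cPhi_right (h : (i' : ℕ) = i + 1) :
    𝐭 (sW r i i') * 𝛗 i' = 𝛗 i * 𝐭 (sW r i i') + 𝛑 i i' := by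
  rw [cPhi_of_succ h, mul_add, cT_sW_mul_sum_lt h, Equiv.swap_apply_right, ← cPhi_eq_sum,
    cT_sW_mul_cPi_mul_cT_sW, Equiv.swap_apply_right, Equiv.swap_apply_left, mul_assoc,
    cT_sW_mul_self, mul_one, add_comm]

theorem cT_sW_mul_cz_left (h : (i' : ℕ) = i + 1) :
    𝐭 (sW r i i') * 𝐳 i = 𝐳 i' * 𝐭 (sW r i i') - c₀ • 𝛑 i i' := by
  rw [cz, cz, mul_add, cT_sW_mul_cY_mul_cX, Equiv.swap_apply_left, mul_smul_comm,
    cT_sW_mul_cPhi_left h, add_mul, smul_mul_assoc, smul_sub, add_sub_assoc]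

theorem cT_sW_mul_cz_right (h : (i' : ℕ) = i + 1) :
    𝐭 (sW r i i') * 𝐳 i' = 𝐳 i * 𝐭 (sW r i i') + c₀ • 𝛑 i i' := by
  rw [cz, cz, mul_add, cT_sW_mul_cY_mul_cX, Equiv.swap_apply_right, mul_smul_comm,
    cT_sW_mul_cPhi_right h, add_mul, smul_mul_assoc, smul_add, add_assoc]

theorem cT_sW_mul_cz_sub_cz (h : (i' : ℕ) = i + 1) :
    𝐭 (sW r i i') * (𝐳 i - 𝐳 i')
      = -((𝐳 i - 𝐳 i') * 𝐭 (sW r i i')) - 2 * (c₀ • 𝛑 i i') := by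
  rw [mul_sub, cT_sW_mul_cz_left h, cT_sW_mul_cz_right h, sub_mul, two_mul]
  abel

end Adjacent

end Cherednik

theorem stmt10 (i i' : Fin n) (h : (i' : ℕ) = (i : ℕ) + 1) :
    cSigma r n κ c₀ c i i' ^ 2 =
      c₀ ^ 2 • cPi r n κ c₀ c i i' ^ 2 - (cz r n κ c₀ c i - cz r n κ c₀ c i') ^ 2 := by
  rw [cSigma, ← smul_pow]
  exact sq_mul_add_eq_sq_sub_sq (cT_sW_mul_cz_sub_cz h)
    (((cPi_commute_cz i i' i).sub_right (cPi_commute_cz i i' i')).smul_left c₀)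
    ((cT_sW_commute_cPi i i').smul_right c₀) (cT_sW_mul_self i i')
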